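/- (Choi–Effros identities) Let Φ : B(H) → B(H) be a completely positive, completely contractive linear map with Φ∘Φ = Φ. Then for all X, Y ∈ B(H): Φ(Φ(X)Y) = Φ(XΦ(Y)) = Φ(Φ(X)Φ(Y)). -/

import Mathlib

open ContinuousLinearMap Filter Topology
open scoped ComplexInnerProductSpace
set_option linter.unusedSectionVars false

noncomputable section

variable {H : Type*} [NormedAddCommGroup H] [InnerProductSpace ℂ H] [CompleteSpace H]

instance PiLpHilbert.completeSpace (n : ℕ) : CompleteSpace (PiLp 2 fun _ : Fin n => H) :=
  inferInstance

/-- The operator on the `n`-fold Hilbert space direct sum `H ⊕₂ ⋯ ⊕₂ H` induced by an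
`n × n` matrix of bounded operators on `H`. -/
def matCLM {n : ℕ} (A : Matrix (Fin n) (Fin n) (H →L[ℂ] H)) :
    (PiLp 2 fun _ : Fin n => H) →L[ℂ] (PiLp 2 fun _ : Fin n => H) :=
  ((PiLp.continuousLinearEquiv 2 ℂ (fun _ : Fin n => H)).symm.toContinuousLinearMap) ∘L
    (ContinuousLinearMap.pi fun i => ∑ j, (A i j) ∘L ContinuousLinearMap.proj j) ∘L
    ((PiLp.continuousLinearEquiv 2 ℂ (fun _ : Fin n => H)).toContinuousLinearMap)

/-- A linear map `Φ` on `B(H)` is completely positive if all its matrix amplifications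
preserve positivity. -/
def CompletelyPositive (Φ : (H →L[ℂ] H) →ₗ[ℂ] (H →L[ℂ] H)) : Prop :=
  ∀ (n : ℕ) (A : Matrix (Fin n) (Fin n) (H →L[ℂ] H)),
    (matCLM A).IsPositive → (matCLM (A.map Φ)).IsPositive

/-- A linear map `Φ` on `B(H)` is completely contractive if all its matrix
amplifications are contractive. -/
def CompletelyContractive (Φ : (H →L[ℂ] H) →ₗ[ℂ] (H →L[ℂ] H)) : Prop :=
  ∀ (n : ℕ) (A : Matrix (Fin n) (Fin n) (H →L[ℂ] H)),
    ‖matCLM (A.map Φ)‖ ≤ ‖matCLM A‖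

lemma matCLM_apply {n : ℕ} (A : Matrix (Fin n) (Fin n) (H →L[ℂ] H))
    (x : PiLp 2 fun _ : Fin n => H) (i : Fin n) :
    matCLM A x i = ∑ j, A i j (x j) := by
  simp [matCLM, ContinuousLinearMap.pi_apply, ContinuousLinearMap.sum_apply]

lemma inner_matCLM {n : ℕ} (A : Matrix (Fin n) (Fin n) (H →L[ℂ] H))
    (x y : PiLp 2 fun _ : Fin n => H) :
    ⟪matCLM A x, y⟫ = ∑ i, ∑ j, ⟪A i j (x j), y i⟫ := by
  rw [PiLp.inner_apply]
  refine Finset.sum_congr rfl fun i _ => ?_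
  rw [matCLM_apply, sum_inner]

lemma matCLM_conj_isPositive {n : ℕ} (N : Matrix (Fin n) (Fin n) (H →L[ℂ] H)) :
    (matCLM (fun i j => ∑ k, adjoint (N k i) ∘L N k j)).IsPositive := by
  rw [ContinuousLinearMap.isPositive_iff_complex]
  intro x
  have key : ⟪matCLM (fun i j => ∑ k, adjoint (N k i) ∘L N k j) x, x⟫
      = ∑ k, ⟪∑ j, N k j (x j), ∑ j, N k j (x j)⟫ := by
    erw [inner_matCLM]
    have h1 : ∀ i j : Fin n, ⟪(∑ k, adjoint (N k i) ∘L N k j) (x j), x i⟫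
        = ∑ k, ⟪N k j (x j), N k i (x i)⟫ := by
      intro i j
      rw [ContinuousLinearMap.sum_apply, sum_inner]
      exact Finset.sum_congr rfl fun k _ => by
        rw [ContinuousLinearMap.comp_apply, ContinuousLinearMap.adjoint_inner_left]
    simp_rw [h1]
    have swap : ∑ i, ∑ j, ∑ k, (⟪N k j (x j), N k i (x i)⟫ : ℂ)
        = ∑ k, ∑ i, ∑ j, (⟪N k j (x j), N k i (x i)⟫ : ℂ) := by
      rw [Finset.sum_congr rfl fun i _ => Finset.sum_comm]
      exact Finset.sum_comm
    rw [swap]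
    refine Finset.sum_congr rfl fun k _ => ?_
    rw [inner_sum]
    exact Finset.sum_congr rfl fun i _ => by rw [sum_inner]
  rw [key]
  have hre : RCLike.re (∑ k, (⟪∑ j, N k j (x j), ∑ j, N k j (x j)⟫ : ℂ))
      = ∑ k, RCLike.re (⟪∑ j, N k j (x j), ∑ j, N k j (x j)⟫ : ℂ) := map_sum _ _ _
  constructor
  · rw [hre, Complex.ofReal_sum]
    exact Finset.sum_congr rfl fun k _ => inner_self_ofReal_re _
  · rw [hre]
    exact Finset.sum_nonneg fun k _ => inner_self_nonneg

lemma matCLM_map (Φ : (H →L[ℂ] H) →ₗ[ℂ] (H →L[ℂ] H)) {n : ℕ}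
    (A : Matrix (Fin n) (Fin n) (H →L[ℂ] H)) :
    (A.map Φ) = fun i j => Φ (A i j) := rfl

lemma pilp_one_norm (v : PiLp 2 fun _ : Fin 1 => H) : ‖v‖ = ‖v 0‖ := by
  have h1 : RCLike.re (⟪v, v⟫ : ℂ) = ‖v‖ ^ 2 := inner_self_eq_norm_sq v
  have h2 : RCLike.re (⟪v 0, v 0⟫ : ℂ) = ‖v 0‖ ^ 2 := inner_self_eq_norm_sq (v 0)
  have h3 : (⟪v, v⟫ : ℂ) = ⟪v 0, v 0⟫ := by
    rw [PiLp.inner_apply, Fin.sum_univ_one]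
  have : ‖v‖ ^ 2 = ‖v 0‖ ^ 2 := by rw [← h1, ← h2, h3]
  nlinarith [norm_nonneg v, norm_nonneg (v 0), sq_nonneg (‖v‖ - ‖v 0‖)]

lemma matCLM_one_one : matCLM (fun _ _ : Fin 1 => (1 : H →L[ℂ] H)) = 1 := by
  refine ContinuousLinearMap.ext fun x => ?_
  have : ∀ i, matCLM (fun _ _ : Fin 1 => (1 : H →L[ℂ] H)) x i = x i := by
    intro i
    erw [matCLM_apply, Fin.sum_univ_one, Subsingleton.elim (0 : Fin 1) i]
    rfl
  exact PiLp.ext this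

lemma norm_le_matCLM_one (T : H →L[ℂ] H) :
    ‖T‖ ≤ ‖matCLM (fun _ _ : Fin 1 => T)‖ := by
  refine ContinuousLinearMap.opNorm_le_bound _ (norm_nonneg _) fun ξ => ?_
  set x : PiLp 2 fun _ : Fin 1 => H := WithLp.toLp 2 (fun _ => ξ) with hx
  have h1 : matCLM (fun _ _ : Fin 1 => T) x 0 = T ξ := by
    erw [matCLM_apply, Fin.sum_univ_one]
  calc ‖T ξ‖ = ‖matCLM (fun _ _ : Fin 1 => T) x‖ := by
        rw [pilp_one_norm, h1]
    _ ≤ ‖matCLM (fun _ _ : Fin 1 => T)‖ * ‖x‖ := le_opNorm _ _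
    _ = ‖matCLM (fun _ _ : Fin 1 => T)‖ * ‖ξ‖ := by rw [pilp_one_norm]

lemma isPositive_matCLM_one_iff (T : H →L[ℂ] H) :
    (matCLM (fun _ _ : Fin 1 => T)).IsPositive ↔ T.IsPositive := by
  rw [ContinuousLinearMap.isPositive_iff_complex, ContinuousLinearMap.isPositive_iff_complex]
  have key : ∀ (x : PiLp 2 fun _ : Fin 1 => H),
      (⟪matCLM (fun _ _ : Fin 1 => T) x, x⟫ : ℂ) = ⟪T (x 0), x 0⟫ := by
    intro x
    erw [inner_matCLM, Fin.sum_univ_one, Fin.sum_univ_one]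
  constructor
  · intro h ξ
    have := h (WithLp.toLp 2 (fun _ => ξ))
    rwa [key] at this
  · intro h x
    rw [key]
    exact h (x 0)

variable (Φ : (H →L[ℂ] H) →ₗ[ℂ] (H →L[ℂ] H))

lemma phi_pos (hCP : CompletelyPositive Φ) {T : H →L[ℂ] H} (hT : T.IsPositive) :
    (Φ T).IsPositive := by
  rw [← isPositive_matCLM_one_iff]
  have := hCP 1 (fun _ _ => T) ((isPositive_matCLM_one_iff T).mpr hT)
  erw [matCLM_map] at this
  exact this

lemma inner_real_of_sa {T : H →L[ℂ] H} (hT : IsSelfAdjoint T) (ξ : H) :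
    ((RCLike.re (⟪T ξ, ξ⟫ : ℂ) : ℝ) : ℂ) = ⟪T ξ, ξ⟫ :=
  RCLike.conj_eq_iff_re.mp
    (((LinearMap.isSymmetric_iff_inner_map_self_real _).mp
      (ContinuousLinearMap.isSelfAdjoint_iff_isSymmetric.mp hT)) ξ)

lemma phi_sa (hCP : CompletelyPositive Φ) {T : H →L[ℂ] H} (hT : IsSelfAdjoint T) :
    IsSelfAdjoint (Φ T) := by
  have hP : ((‖T‖ : ℂ) • 1 + T).IsPositive := by
    rw [ContinuousLinearMap.isPositive_iff_complex]
    intro ξ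
    have hsymm := inner_real_of_sa hT ξ
    have happ : (⟪((‖T‖ : ℂ) • 1 + T) ξ, ξ⟫ : ℂ)
        = (‖T‖ : ℂ) * ⟪ξ, ξ⟫ + ⟪T ξ, ξ⟫ := by
      rw [ContinuousLinearMap.add_apply, inner_add_left, ContinuousLinearMap.smul_apply,
        ContinuousLinearMap.one_apply, inner_smul_left, Complex.conj_ofReal]
    have hb : |RCLike.re (⟪T ξ, ξ⟫ : ℂ)| ≤ ‖T‖ * ‖ξ‖ ^ 2 := by
      calc |RCLike.re (⟪T ξ, ξ⟫ : ℂ)| ≤ ‖(⟪T ξ, ξ⟫ : ℂ)‖ := RCLike.abs_re_le_norm _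
        _ ≤ ‖T ξ‖ * ‖ξ‖ := norm_inner_le_norm _ _
        _ ≤ ‖T‖ * ‖ξ‖ * ‖ξ‖ := by
            have := ContinuousLinearMap.le_opNorm T ξ
            have := norm_nonneg ξ
            nlinarith
        _ = ‖T‖ * ‖ξ‖ ^ 2 := by ring
    have hinner : (⟪ξ, ξ⟫ : ℂ) = ((‖ξ‖ ^ 2 : ℝ) : ℂ) := by
      rw [inner_self_eq_norm_sq_to_K]; norm_cast
    have hX : (⟪((‖T‖ : ℂ) • 1 + T) ξ, ξ⟫ : ℂ)
        = ((‖T‖ * ‖ξ‖ ^ 2 + RCLike.re (⟪T ξ, ξ⟫ : ℂ) : ℝ) : ℂ) := by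
      rw [happ, hinner, ← hsymm]; norm_cast
    constructor
    · rw [hX]; norm_cast
    · rw [hX]
      simp only [RCLike.re_to_complex, Complex.add_re, Complex.ofReal_re]
      have hb' := (abs_le.mp hb).1
      simp only [RCLike.re_to_complex] at hb'
      linarith
  have h1 : (Φ ((‖T‖ : ℂ) • 1 + T)).IsPositive := phi_pos Φ hCP hP
  have h2 : (Φ 1).IsPositive := phi_pos Φ hCP ContinuousLinearMap.isPositive_one
  have hTeq : Φ T = Φ ((‖T‖ : ℂ) • 1 + T) - (‖T‖ : ℂ) • Φ 1 := by
    rw [map_add, map_smul]; abel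
  have h3 : IsSelfAdjoint ((‖T‖ : ℂ) • Φ 1) := by
    rw [IsSelfAdjoint, star_smul, Complex.star_def, Complex.conj_ofReal, h2.isSelfAdjoint.star_eq]
  rw [hTeq]
  exact h1.isSelfAdjoint.sub h3

lemma phi_star (hCP : CompletelyPositive Φ) (X : H →L[ℂ] H) :
    Φ (star X) = star (Φ X) := by
  have hA : IsSelfAdjoint (X + star X) := by
    rw [IsSelfAdjoint, star_add, star_star]; exact add_comm _ _
  have hB : IsSelfAdjoint (Complex.I • (X - star X)) := by
    rw [IsSelfAdjoint, star_smul, star_sub, star_star, Complex.star_def, Complex.conj_I,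
      neg_smul, ← smul_neg, neg_sub]
  have hXstar : star X = (2⁻¹ : ℂ) •
      ((X + star X) + Complex.I • (Complex.I • (X - star X))) := by
    rw [smul_smul, Complex.I_mul_I]
    module
  have hXeq : X = (2⁻¹ : ℂ) •
      ((X + star X) - Complex.I • (Complex.I • (X - star X))) := by
    rw [smul_smul, Complex.I_mul_I]
    module
  have hPA := (phi_sa Φ hCP hA).star_eq
  have hPB := (phi_sa Φ hCP hB).star_eq
  have e1 : Φ (star X) = (2⁻¹ : ℂ) •
      (Φ (X + star X) + Complex.I • Φ (Complex.I • (X - star X))) := by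
    conv_lhs => rw [hXstar]
    rw [map_smul, map_add, map_smul]
  have e2 : Φ X = (2⁻¹ : ℂ) •
      (Φ (X + star X) - Complex.I • Φ (Complex.I • (X - star X))) := by
    conv_lhs => rw [hXeq]
    rw [map_smul, map_sub, map_smul]
  rw [e1, e2, star_smul, star_sub, star_smul, hPA, hPB, Complex.star_def, Complex.conj_I,
    map_inv₀, map_ofNat, neg_smul, sub_neg_eq_add]

lemma phi_one_bound (hCC : CompletelyContractive Φ) (ξ : H) :
    RCLike.re (⟪Φ 1 ξ, ξ⟫ : ℂ) ≤ ‖ξ‖ ^ 2 := by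
  have h1 : ‖Φ 1‖ ≤ 1 := by
    have h2 : ‖matCLM (fun _ _ : Fin 1 => Φ (1 : H →L[ℂ] H))‖
        ≤ ‖matCLM (fun _ _ : Fin 1 => (1 : H →L[ℂ] H))‖ := hCC 1 (fun _ _ => 1)
    rw [matCLM_one_one] at h2
    have h3 := norm_le_matCLM_one (Φ (1 : H →L[ℂ] H))
    have h4 : ‖(1 : (PiLp 2 fun _ : Fin 1 => H) →L[ℂ] (PiLp 2 fun _ : Fin 1 => H))‖ ≤ 1 := by
      rw [ContinuousLinearMap.one_def]; exact ContinuousLinearMap.norm_id_le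
    exact le_trans h3 (le_trans h2 h4)
  have h5 := ContinuousLinearMap.le_opNorm (Φ 1) ξ
  have h6 : ‖(⟪Φ 1 ξ, ξ⟫ : ℂ)‖ ≤ ‖Φ 1 ξ‖ * ‖ξ‖ := norm_inner_le_norm _ _
  have h7 : RCLike.re (⟪Φ 1 ξ, ξ⟫ : ℂ) ≤ ‖(⟪Φ 1 ξ, ξ⟫ : ℂ)‖ := RCLike.re_le_norm _
  nlinarith [norm_nonneg ξ, norm_nonneg (Φ 1 ξ)]

lemma phi_schwarz (hCP : CompletelyPositive Φ) (hCC : CompletelyContractive Φ)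
    (u : H →L[ℂ] H) (η : H) :
    ‖Φ u η‖ ^ 2 ≤ RCLike.re (⟪Φ (adjoint u ∘L u) η, η⟫ : ℂ) := by
  set N : Matrix (Fin 2) (Fin 2) (H →L[ℂ] H) := ![![1, u], ![0, 0]] with hN
  have hNM : (fun i j => ∑ k, adjoint (N k i) ∘L N k j)
      = ![![1, u], ![adjoint u, adjoint u ∘L u]] := by
    funext i j
    fin_cases i <;> fin_cases j <;>
      simp [hN, Fin.sum_univ_two, ContinuousLinearMap.one_def, ContinuousLinearMap.adjoint_id,
        ContinuousLinearMap.comp_zero, ContinuousLinearMap.zero_comp,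
        ContinuousLinearMap.comp_id, ContinuousLinearMap.id_comp]
  have hM : (matCLM (![![1, u], ![adjoint u, adjoint u ∘L u]] :
      Matrix (Fin 2) (Fin 2) (H →L[ℂ] H))).IsPositive := by
    rw [← hNM]; exact matCLM_conj_isPositive N
  have hM2 := hCP 2 _ hM
  erw [matCLM_map] at hM2
  set ξ : H := -(Φ u η) with hξ
  have hq := hM2.2 (show PiLp 2 (fun _ : Fin 2 => H) from WithLp.toLp 2 ![ξ, η])
  rw [ContinuousLinearMap.reApplyInnerSelf_apply] at hq
  erw [inner_matCLM] at hq
  rw [Fin.sum_univ_two, Fin.sum_univ_two, Fin.sum_univ_two] at hq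
  simp only [Matrix.cons_val_zero, Matrix.cons_val_one, Matrix.head_cons] at hq
  rw [map_add, map_add, map_add] at hq
  -- term bounds
  have t1 : RCLike.re (⟪Φ 1 ξ, ξ⟫ : ℂ) ≤ ‖Φ u η‖ ^ 2 := by
    have := phi_one_bound Φ hCC ξ
    rwa [hξ, norm_neg] at this
  have t2 : RCLike.re (⟪Φ u η, ξ⟫ : ℂ) = -(‖Φ u η‖ ^ 2) := by
    rw [hξ, inner_neg_right, map_neg, inner_self_eq_norm_sq]
  have t3 : RCLike.re (⟪Φ (adjoint u) ξ, η⟫ : ℂ) = -(‖Φ u η‖ ^ 2) := by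
    rw [show adjoint u = star u from (ContinuousLinearMap.star_eq_adjoint u).symm,
      phi_star Φ hCP, ContinuousLinearMap.star_eq_adjoint,
      ContinuousLinearMap.adjoint_inner_left, hξ, inner_neg_left, map_neg,
      inner_self_eq_norm_sq]
  linarith [hq, t1]

lemma star_mul_self_isPositive (w : H →L[ℂ] H) : (star w * w).IsPositive := by
  rw [ContinuousLinearMap.isPositive_iff_complex]
  intro ξ
  have h : (⟪(star w * w) ξ, ξ⟫ : ℂ) = ⟪w ξ, w ξ⟫ := by
    rw [show (star w * w) ξ = (adjoint w) (w ξ) by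
      rw [ContinuousLinearMap.mul_def, ContinuousLinearMap.star_eq_adjoint]; rfl]
    rw [ContinuousLinearMap.adjoint_inner_left]
  rw [h]
  exact ⟨inner_self_ofReal_re _, inner_self_nonneg⟩

lemma phi_ker_key (hCP : CompletelyPositive Φ) (hCC : CompletelyContractive Φ)
    (hidem : ∀ X, Φ (Φ X) = Φ X) {a w : H →L[ℂ] H} (ha : Φ a = a) (hw : Φ w = 0) :
    Φ (a * w + star w * star a) = 0 := by
  have hsa' : Φ (star a) = star a := by rw [phi_star Φ hCP, ha]
  set B := Φ (a * w + star w * star a) with hBdef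
  set D := Φ (star w * w) with hDdef
  have hBsa : IsSelfAdjoint B := phi_sa Φ hCP (by
    rw [IsSelfAdjoint, star_add, star_mul, star_mul, star_star, star_star]
    exact add_comm _ _)
  have hDpos : D.IsPositive := phi_pos Φ hCP (star_mul_self_isPositive w)
  have key_t : ∀ t : ℝ, (((t : ℂ) • B + ((t : ℂ) ^ 2) • D)).IsPositive := by
    intro t
    set u := star a + (t : ℂ) • w with hu
    have hu1 : Φ u = star a := by
      rw [hu, map_add, map_smul, hw, hsa', smul_zero, add_zero]
    have hexp : star u * u = a * star a + (t : ℂ) • (a * w + star w * star a)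
        + ((t : ℂ) ^ 2) • (star w * w) := by
      rw [hu, star_add, star_smul, star_star, Complex.star_def, Complex.conj_ofReal]
      rw [add_mul, mul_add, mul_add, mul_smul_comm, smul_mul_assoc, smul_mul_assoc,
        mul_smul_comm, smul_smul, smul_add]
      rw [show ((t:ℂ)^2) = (t:ℂ) * (t:ℂ) from sq _]
      abel
    have hRsa : IsSelfAdjoint (Φ (star u * u) - a * star a) := by
      have h1 : IsSelfAdjoint (star u * u) := by
        rw [IsSelfAdjoint, star_mul, star_star]
      have h2 : IsSelfAdjoint (a * star a) := by
        rw [IsSelfAdjoint, star_mul, star_star]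
      exact (phi_sa Φ hCP h1).sub h2
    have hRpos : (Φ (star u * u) - a * star a).IsPositive := by
      refine ContinuousLinearMap.isPositive_def'.mpr ⟨hRsa, fun ξ => ?_⟩
      rw [ContinuousLinearMap.reApplyInnerSelf_apply, ContinuousLinearMap.sub_apply,
        inner_sub_left, map_sub]
      have hsch := phi_schwarz Φ hCP hCC u ξ
      rw [hu1] at hsch
      have hasa : RCLike.re (⟪(a * star a) ξ, ξ⟫ : ℂ) = ‖(star a) ξ‖ ^ 2 := by
        have h2 : adjoint (star a) = a := by
          rw [ContinuousLinearMap.star_eq_adjoint, ContinuousLinearMap.adjoint_adjoint]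
        have h0 : (⟪(a * star a) ξ, ξ⟫ : ℂ) = ⟪(star a) ξ, (star a) ξ⟫ := by
          have h1 : (a * star a) ξ = (adjoint (star a)) ((star a) ξ) := by rw [h2]; rfl
          rw [h1, ContinuousLinearMap.adjoint_inner_left]
        rw [h0, inner_self_eq_norm_sq]
      rw [hasa]
      have hconv : Φ (adjoint u ∘L u) = Φ (star u * u) := by
        rw [ContinuousLinearMap.mul_def, ContinuousLinearMap.star_eq_adjoint]
      rw [hconv] at hsch
      have : ‖(star a) ξ‖ ^ 2 ≤ RCLike.re (⟪Φ (star u * u) ξ, ξ⟫ : ℂ) := by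
        calc ‖(star a) ξ‖ ^ 2 = ‖(star a : H →L[ℂ] H) ξ‖ ^ 2 := rfl
          _ ≤ _ := hsch
      linarith
    have hPhiR : Φ (Φ (star u * u) - a * star a)
        = (t : ℂ) • B + ((t : ℂ) ^ 2) • D := by
      rw [map_sub, hidem, hexp, map_add, map_add, map_smul, map_smul, ← hBdef, ← hDdef]
      abel
    rw [← hPhiR]
    exact phi_pos Φ hCP hRpos
  have hBzero : ∀ ξ : H, RCLike.re (⟪B ξ, ξ⟫ : ℂ) = 0 := by
    intro ξ
    set b := RCLike.re (⟪B ξ, ξ⟫ : ℂ) with hb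
    set d := RCLike.re (⟪D ξ, ξ⟫ : ℂ) with hd
    have hdpos : 0 ≤ d := by
      have := hDpos.2 ξ
      rwa [ContinuousLinearMap.reApplyInnerSelf_apply] at this
    have hq : ∀ t : ℝ, 0 ≤ t * b + t ^ 2 * d := by
      intro t
      have := (key_t t).2 ξ
      rw [ContinuousLinearMap.reApplyInnerSelf_apply, ContinuousLinearMap.add_apply,
        inner_add_left, ContinuousLinearMap.smul_apply, ContinuousLinearMap.smul_apply,
        inner_smul_left, inner_smul_left, map_add] at this
      rw [show (starRingEnd ℂ) ((t : ℂ)) = (t : ℂ) from Complex.conj_ofReal t] at this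
      rw [show (starRingEnd ℂ) ((t : ℂ) ^ 2) = ((t : ℂ)) ^ 2 by
        rw [map_pow, Complex.conj_ofReal]] at this
      rw [show ((t : ℂ) ^ 2) = (((t ^ 2 : ℝ)) : ℂ) by push_cast; ring] at this
      simp only [RCLike.re_to_complex] at this
      rw [Complex.re_ofReal_mul, Complex.re_ofReal_mul] at this
      have hb' : b = (⟪B ξ, ξ⟫ : ℂ).re := rfl
      have hd' : d = (⟪D ξ, ξ⟫ : ℂ).re := rfl
      rw [hb', hd']
      linarith
    have h := hq (-b / (d + 1))
    have hd1 : 0 < d + 1 := by linarith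
    have h2 : 0 ≤ (-b / (d + 1) * b + (-b / (d + 1)) ^ 2 * d) * (d + 1) ^ 2 :=
      mul_nonneg h (sq_nonneg _)
    have h3 : (-b / (d + 1) * b + (-b / (d + 1)) ^ 2 * d) * (d + 1) ^ 2
        = -(b ^ 2) * (d + 1) + b ^ 2 * d := by
      field_simp
    have hb2 : b ^ 2 = 0 := le_antisymm (by nlinarith) (sq_nonneg b)
    exact sq_eq_zero_iff.mp hb2
  have hBinner : ∀ ξ : H, (⟪B ξ, ξ⟫ : ℂ) = 0 := by
    intro ξ
    rw [← inner_real_of_sa hBsa ξ, hBzero ξ]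
    norm_num
  have hlin : (B : H →ₗ[ℂ] H) = 0 := (inner_map_self_eq_zero _).mp hBinner
  exact ContinuousLinearMap.coe_injective (by rw [hlin, ContinuousLinearMap.coe_zero])

lemma phi_ran_mul_ker (hCP : CompletelyPositive Φ) (hCC : CompletelyContractive Φ)
    (hidem : ∀ X, Φ (Φ X) = Φ X) {a z : H →L[ℂ] H} (ha : Φ a = a) (hz : Φ z = 0) :
    Φ (a * z) = 0 := by
  have h1 := phi_ker_key Φ hCP hCC hidem ha hz
  have hz2 : Φ (Complex.I • z) = 0 := by rw [map_smul, hz, smul_zero]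
  have h2 := phi_ker_key Φ hCP hCC hidem ha hz2
  have hrw : a * (Complex.I • z) + star (Complex.I • z) * star a
      = Complex.I • (a * z) - Complex.I • (star z * star a) := by
    rw [mul_smul_comm, star_smul, Complex.star_def, Complex.conj_I, smul_mul_assoc,
      neg_smul, sub_eq_add_neg]
  rw [hrw, map_sub, map_smul, map_smul, sub_eq_zero] at h2
  have h3 : Φ (a * z) = Φ (star z * star a) := smul_right_injective _ Complex.I_ne_zero h2
  rw [map_add, ← h3] at h1
  have h4 : (2 : ℂ) • Φ (a * z) = (2 : ℂ) • (0 : H →L[ℂ] H) := by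
    rw [smul_zero, two_smul]; exact h1
  exact smul_right_injective _ (two_ne_zero) h4

theorem choi_effros_identities'
    (Φ : (H →L[ℂ] H) →ₗ[ℂ] (H →L[ℂ] H))
    (hCP : CompletelyPositive Φ) (hCC : CompletelyContractive Φ)
    (hidem : ∀ X, Φ (Φ X) = Φ X) :
    ∀ X Y : H →L[ℂ] H,
      Φ (Φ X ∘L Y) = Φ (X ∘L Φ Y) ∧ Φ (Φ X ∘L Y) = Φ (Φ X ∘L Φ Y) := by
  intro X Y
  have hz : Φ (Y - Φ Y) = 0 := by rw [map_sub, hidem, sub_self]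
  have ha : Φ (Φ X) = Φ X := hidem X
  have h2 : Φ (Φ X ∘L Y) = Φ (Φ X ∘L Φ Y) := by
    have h := phi_ran_mul_ker Φ hCP hCC hidem ha hz
    have hmul : Φ X * (Y - Φ Y) = Φ X ∘L Y - Φ X ∘L Φ Y := by rw [mul_sub]; rfl
    rw [hmul, map_sub, sub_eq_zero] at h
    exact h
  have h1 : Φ (X ∘L Φ Y) = Φ (Φ X ∘L Φ Y) := by
    have hz' : Φ (star (X - Φ X)) = 0 := by
      rw [phi_star Φ hCP, map_sub, hidem, sub_self, star_zero]
    have hb : Φ (star (Φ Y)) = star (Φ Y) := by rw [phi_star Φ hCP, hidem]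
    have h0 := phi_ran_mul_ker Φ hCP hCC hidem hb hz'
    have h0' : Φ (star (star (Φ Y) * star (X - Φ X))) = 0 := by
      rw [phi_star Φ hCP, h0, star_zero]
    rw [star_mul, star_star, star_star] at h0'
    have hmul : (X - Φ X) * Φ Y = X ∘L Φ Y - Φ X ∘L Φ Y := by rw [sub_mul]; rfl
    rw [hmul, map_sub, sub_eq_zero] at h0'
    exact h0'
  exact ⟨h2.trans h1.symm, h2⟩

/-- Choi–Effros identities: a completely positive, completely contractive, idempotent
linear map `Φ` on `B(H)` satisfies `Φ(Φ(X)Y) = Φ(XΦ(Y)) = Φ(Φ(X)Φ(Y))`. -/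
theorem choi_effros_identities
    (Φ : (H →L[ℂ] H) →ₗ[ℂ] (H →L[ℂ] H))
    (hCP : CompletelyPositive Φ) (hCC : CompletelyContractive Φ)
    (hidem : ∀ X, Φ (Φ X) = Φ X) :
    ∀ X Y : H →L[ℂ] H,
      Φ (Φ X ∘L Y) = Φ (X ∘L Φ Y) ∧ Φ (Φ X ∘L Y) = Φ (Φ X ∘L Φ Y) := by
  exact choi_effros_identities' Φ hCP hCC hidem

end
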